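/- arXiv:1603.03639 — 4 statements merged into one kernel-verified Lean document; each statement's English description precedes it below -/
import Mathlib

section
/- Let $u, v, \tilde v, u', v', \tilde v' \in \mathbb{C}$ with $u \neq -1$ and $\bar{u}' \neq -1$ (e.g. $|u|<1$, $|u'|<1$). Define the $2\times 2$ matrices $M = \begin{pmatrix} u & v \\ \tilde v & \tilde v v/(1+u)\end{pmatrix}$ and $M' = \begin{pmatrix} u' & v' \\ \tilde v' & \tilde v' v'/(1+u')\end{pmatrix}$. Then $\det\big(I_2 - M (M')^*\big) = 1 - u\bar{u}' - v\bar{v}' - \tilde v \bar{\tilde v}'$. -/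
/-! For a `2 × 2` matrix `A`, `det (1 - A) = 1 - tr A + det A`. With `A = M M'ᴴ`, the trace is
the entrywise Hermitian product of `M` and `M'`, and `det A = det M · conj (det M')`. The choice
of the corner entry `d = ṽ v / (1 + u)` makes `det M = u d - v ṽ = -d`, so the two `d d̄'` terms
cancel and only the three free entries survive. -/

open Matrix ComplexConjugate

theorem Matrix.det_one_sub_fin_two {R : Type*} [CommRing R] (A : Matrix (Fin 2) (Fin 2) R) :
    (1 - A).det = 1 - A.trace + A.det := by
  simp only [det_fin_two, trace_fin_two, sub_apply, one_apply_eq, one_apply_ne, ne_eq,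
    zero_ne_one, one_ne_zero, not_false_eq_true]
  ring

theorem Matrix.trace_mul_conjTranspose {m n R : Type*} [Fintype m] [Fintype n]
    [NonUnitalNonAssocSemiring R] [Star R] (A B : Matrix m n R) :
    (A * Bᴴ).trace = ∑ i, ∑ j, A i j * star (B i j) := by
  simp [trace, mul_apply, conjTranspose_apply]

def mokMatrix {K : Type*} [Field K] (u v tv : K) : Matrix (Fin 2) (Fin 2) K :=
  !![u, v; tv, tv * v / (1 + u)]

theorem mokMatrix_det {K : Type*} [Field K] {u : K} (v tv : K) (hu : u ≠ -1) :
    (mokMatrix u v tv).det = -(tv * v / (1 + u)) := by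
  have : 1 + u ≠ 0 := by rwa [add_comm, ← sub_neg_eq_add, sub_ne_zero]
  rw [mokMatrix, det_fin_two_of]
  field_simp
  ring

theorem mok_embedding_isometry (u v tv u' v' tv' : ℂ)
    (hu : u ≠ -1) (hu' : conj u' ≠ -1) :
    (1 - (!![u, v; tv, tv * v / (1 + u)]) * (!![u', v'; tv', tv' * v' / (1 + u')])ᴴ).det
      = 1 - u * conj u' - v * conj v' - tv * conj tv' := by
  have hu'_ne : u' ≠ -1 := fun h => hu' (by rw [h, map_neg, map_one])
  change (1 - mokMatrix u v tv * (mokMatrix u' v' tv')ᴴ).det = _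
  rw [det_one_sub_fin_two, trace_mul_conjTranspose, det_mul, det_conjTranspose,
    mokMatrix_det v tv hu, mokMatrix_det v' tv' hu'_ne]
  simp only [mokMatrix, Fin.sum_univ_two, of_apply, cons_val', cons_val_fin_one, cons_val_zero,
    cons_val_one, RCLike.star_def, star_neg]
  ring
end

section
/- Define $F : \mathbb{C}^2 \to \mathbb{C}^{2\times 2}$ by $F(z_1,z_2) = \begin{pmatrix} 0 & z_1 \\ z_2 & z_1 z_2 \end{pmatrix}$. Then for all $z = (z_1,z_2)$ and $w = (w_1,w_2)$ in $\mathbb{C}^2$, $\det\big(I_2 - F(z) F(w)^*\big) = 1 - z_1\bar{w}_1 - z_2 \bar{w}_2$. -/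
open Matrix ComplexConjugate

/-! For a $2 \times 2$ matrix $X$ the characteristic polynomial gives
$\det(I - X) = 1 - \operatorname{tr} X + \det X$. With $X = F(z)F(w)^*$ the determinant term
$\det F(z)\,\overline{\det F(w)} = z_1z_2\bar w_1\bar w_2$ cancels the cross term of the trace
$\operatorname{tr} F(z)F(w)^* = z_1\bar w_1 + z_2\bar w_2 + z_1z_2\bar w_1\bar w_2$. -/

namespace Matrix

theorem det_one_sub_fin_two_s6 {R : Type*} [CommRing R] (X : Matrix (Fin 2) (Fin 2) R) :
    (1 - X).det = 1 - X.trace + X.det := by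
  simp only [det_fin_two, trace_fin_two, sub_apply, one_apply_eq, one_apply_ne zero_ne_one,
    one_apply_ne one_ne_zero]
  ring

theorem trace_mul_conjTranspose_s6 {m n R : Type*} [Fintype m] [Fintype n] [CommSemiring R]
    [StarRing R] (A B : Matrix m n R) :
    (A * Bᴴ).trace = ∑ i, ∑ j, A i j * star (B i j) := by
  simp only [trace, diag_apply, mul_apply, conjTranspose_apply]

end Matrix

theorem nonstandard_isometry_ball2 (z1 z2 w1 w2 : ℂ) :
    (1 - (!![0, z1; z2, z1 * z2]) * (!![0, w1; w2, w1 * w2])ᴴ).det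
      = 1 - z1 * conj w1 - z2 * conj w2 := by
  rw [det_one_sub_fin_two_s6, trace_mul_conjTranspose_s6, det_mul, det_conjTranspose]
  simp only [Fin.sum_univ_two, det_fin_two_of, of_apply, cons_val', cons_val_zero, cons_val_one,
    empty_val', cons_val_fin_one, Complex.star_def, map_mul, map_sub, map_zero]
  ring
end

section
/- For $z, w \in \mathbb{C}^{d+1}$ define $\Delta(z,w) = 1 - 2\sum_{j} z_j \bar w_j + N(z)\overline{N(w)}$ where $N(z) = \sum_j z_j^2$. For $z_1 \in \mathbb{C}$ with $z_1 \neq -1$ and $z' \in \mathbb{C}^{d-1}$, set $q(z_1,z') = -\frac{\sum_j (z'_j)^2}{1+z_1}$ and define $G(z_1,z') = \big(\tfrac{z_1 + q}{2},\ \tfrac{i(z_1 - q)}{2},\ z'\big) \in \mathbb{C}^{d+1}$. Then for all such $(z_1,z')$ and $(w_1,w')$: $\Delta\big(G(z_1,z'), G(w_1,w')\big) = 1 - z_1 \bar w_1 - 2\sum_j z'_j \bar w'_j$. -/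
open ComplexConjugate

/-- The spin factor determinant `N(z) = ∑ z_j²` on `ℂ^{d+1} = ℂ × ℂ × ℂ^{d-1}`. -/
noncomputable def lieN {m : ℕ} (z : ℂ × ℂ × (Fin m → ℂ)) : ℂ :=
  z.1 ^ 2 + z.2.1 ^ 2 + ∑ j, (z.2.2 j) ^ 2

/-- The quasi-determinant `Δ(z,w) = 1 - 2∑ z_j conj(w_j) + N(z) conj(N(w))` of the spin
factor whose unit ball is the Lie ball. -/
noncomputable def lieDelta {m : ℕ} (z w : ℂ × ℂ × (Fin m → ℂ)) : ℂ :=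
  1 - 2 * (z.1 * conj w.1 + z.2.1 * conj w.2.1 + ∑ j, z.2.2 j * conj (w.2.2 j)) +
    lieN z * conj (lieN w)

/-- The Mok type rational embedding of the unit ball into the Lie ball. -/
noncomputable def mokLie {m : ℕ} (z1 : ℂ) (z' : Fin m → ℂ) : ℂ × ℂ × (Fin m → ℂ) :=
  ((z1 + (-(∑ j, (z' j) ^ 2) / (1 + z1))) / 2,
   Complex.I * (z1 - (-(∑ j, (z' j) ^ 2) / (1 + z1))) / 2, z')

/-! The pair `((a + b)/2, i(a - b)/2)` has `N`-part `a b` and pairs with `((c + e)/2, i(c - e)/2)`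
to `(a c̄ + b ē)/2`. With `a = z₁` and `b = q(z₁, z')` this gives `N(G(z)) = z₁ q + ∑ z'ⱼ² = -q`,
so in `Δ(G(z), G(w))` the cross terms `q r̄` coming from the pairing and from `N(G z) N(G w)‾`
cancel, leaving `1 - z₁ w̄₁ - 2 ∑ z'ⱼ w̄'ⱼ`. -/

lemma sq_add_sq_half_sum_diff (a b : ℂ) :
    ((a + b) / 2) ^ 2 + (Complex.I * (a - b) / 2) ^ 2 = a * b := by
  linear_combination (a - b) ^ 2 / 4 * Complex.I_sq

lemma half_sum_diff_pairing (a b c e : ℂ) :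
    (a + b) / 2 * conj ((c + e) / 2) + Complex.I * (a - b) / 2 * conj (Complex.I * (c - e) / 2)
      = (a * conj c + b * conj e) / 2 := by
  simp only [map_div₀, map_add, map_sub, map_mul, Complex.conj_I, map_ofNat]
  linear_combination -(a - b) * (conj c - conj e) / 4 * Complex.I_sq

/-- The function `q(z₁, z')` of the Mok embedding. -/
noncomputable def mokQ {m : ℕ} (z1 : ℂ) (z' : Fin m → ℂ) : ℂ :=
  -(∑ j, z' j ^ 2) / (1 + z1)

section

variable {m : ℕ} (z1 : ℂ) (z' : Fin m → ℂ)

lemma mokLie_eq_mokQ :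
    mokLie z1 z' = ((z1 + mokQ z1 z') / 2, Complex.I * (z1 - mokQ z1 z') / 2, z') :=
  rfl

variable {z1} in
lemma lieN_mokLie (hz : z1 ≠ -1) : lieN (mokLie z1 z') = -mokQ z1 z' := by
  have h : 1 + z1 ≠ 0 := fun h => hz (by linear_combination h)
  rw [lieN, mokLie_eq_mokQ, sq_add_sq_half_sum_diff, mokQ]
  field_simp
  ring

end

theorem mok_lie_isometry_general (d : ℕ) (z1 w1 : ℂ)
    (z' w' : Fin (d - 1) → ℂ) (hz : z1 ≠ -1) (hw : w1 ≠ -1) :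
    lieDelta (mokLie z1 z') (mokLie w1 w')
      = 1 - z1 * conj w1 - 2 * ∑ j, z' j * conj (w' j) := by
  rw [lieDelta, lieN_mokLie z' hz, lieN_mokLie w' hw, mokLie_eq_mokQ, mokLie_eq_mokQ,
    half_sum_diff_pairing, map_neg]
  ring

theorem mok_lie_isometry (d : ℕ) (hd : 2 ≤ d) (z1 w1 : ℂ)
    (z' w' : Fin (d - 1) → ℂ) (hz : z1 ≠ -1) (hw : w1 ≠ -1) :
    lieDelta (mokLie z1 z') (mokLie w1 w')
      = 1 - z1 * conj w1 - 2 * ∑ j, z' j * conj (w' j) :=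
  mok_lie_isometry_general d z1 w1 z' w' hz hw
end

section
/- For $z,w \in \mathbb{C}^{d+1}$ let $\Delta(z,w) = 1 - 2\sum_j z_j\bar w_j + N(z)\overline{N(w)}$ with $N(z) = \sum_j z_j^2$. Let $u, u' \in \mathbb{C}$, $v, v' \in \mathbb{C}^{d-1}$, and suppose $h, h' \in \mathbb{C}$ satisfy $h^2 + 2h = u^2 + 2\sum_j v_j^2$ and $(h')^2 + 2h' = (u')^2 + 2\sum_j (v'_j)^2$. Define $F = \big(u/\sqrt2,\ -i h/\sqrt2,\ v\big)$ and $F' = \big(u'/\sqrt2,\ -i h'/\sqrt2,\ v'\big)$ in $\mathbb{C}^{d+1}$. Then $\Delta(F, F') = 1 - u\bar u' - 2\sum_j v_j \bar v'_j$. -/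
open ComplexConjugate

/-! The quadratic relation for `h` says exactly that `N(F) = h`, while
`2 ⟨F, F'⟩ = u ū' + h h̄' + 2 ⟨v, v'⟩`; the two `h h̄'` terms then cancel in `Δ(F, F')`. -/

lemma Complex.ofReal_sqrt_two_sq : ((√2 : ℝ) : ℂ) ^ 2 = 2 := by
  rw [← Complex.ofReal_pow, Real.sq_sqrt zero_le_two, Complex.ofReal_ofNat]

lemma lieN_eq_of_sq_add_two_mul {m : ℕ} {u h : ℂ} {v : Fin m → ℂ}
    (hh : h ^ 2 + 2 * h = u ^ 2 + 2 * ∑ j, v j ^ 2) :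
    lieN ((u / √2, -Complex.I * h / √2, v) : ℂ × ℂ × (Fin m → ℂ)) = h := by
  have hs := Complex.ofReal_sqrt_two_sq
  simp only [lieN, div_pow, mul_pow, neg_sq, Complex.I_sq, hs]
  linear_combination -hh / 2

lemma two_mul_inner_sqrt_two_embedding {m : ℕ} (u u' h h' : ℂ) (v v' : Fin m → ℂ) :
    2 * (u / √2 * conj (u' / √2) + -Complex.I * h / √2 * conj (-Complex.I * h' / √2) +
      ∑ j, v j * conj (v' j)) =
      u * conj u' + h * conj h' + 2 * ∑ j, v j * conj (v' j) := by
  have hs := Complex.ofReal_sqrt_two_sq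
  have hs0 : ((√2 : ℝ) : ℂ) ≠ 0 := by exact_mod_cast (Real.sqrt_pos.2 two_pos).ne'
  simp only [map_div₀, map_mul, map_neg, Complex.conj_I, Complex.conj_ofReal]
  field_simp
  linear_combination -2 * h * conj h' * Complex.I_sq - (u * conj u' + h * conj h') * hs

theorem irrational_lie_isometry_general (d : ℕ) (u u' h h' : ℂ)
    (v v' : Fin (d - 1) → ℂ)
    (hh : h ^ 2 + 2 * h = u ^ 2 + 2 * ∑ j, (v j) ^ 2)
    (hh' : h' ^ 2 + 2 * h' = u' ^ 2 + 2 * ∑ j, (v' j) ^ 2) :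
    lieDelta (u / Real.sqrt 2, -Complex.I * h / Real.sqrt 2, v)
        (u' / Real.sqrt 2, -Complex.I * h' / Real.sqrt 2, v')
      = 1 - u * conj u' - 2 * ∑ j, v j * conj (v' j) := by
  rw [lieDelta, lieN_eq_of_sq_add_two_mul hh, lieN_eq_of_sq_add_two_mul hh',
    two_mul_inner_sqrt_two_embedding]
  ring

theorem irrational_lie_isometry (d : ℕ) (hd : 2 ≤ d) (u u' h h' : ℂ)
    (v v' : Fin (d - 1) → ℂ)
    (hh : h ^ 2 + 2 * h = u ^ 2 + 2 * ∑ j, (v j) ^ 2)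
    (hh' : h' ^ 2 + 2 * h' = u' ^ 2 + 2 * ∑ j, (v' j) ^ 2) :
    lieDelta (u / Real.sqrt 2, -Complex.I * h / Real.sqrt 2, v)
        (u' / Real.sqrt 2, -Complex.I * h' / Real.sqrt 2, v')
      = 1 - u * conj u' - 2 * ∑ j, v j * conj (v' j) :=
  irrational_lie_isometry_general d u u' h h' v v' hh hh'
end
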